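/- Let S be a finite set, let ν_j (j ∈ S) be probability measures on [0,1], and let f(x) = Σ_𝓵 γ_𝓵 ∏_{j∈S} 𝟙(x_j ∈ I_{j,ℓ_j}) be a multinary-product tree on interval partitions 𝒫_j = {I_{j,1},…,I_{j,φ_j}} of [0,1] that is ν-identifiable. Suppose h ∈ S has φ_h = r > 2, with the intervals I_{h,1} < ⋯ < I_{h,r} ordered from left to right. Then there exist r − 1 multinary-product trees f_1, …, f_{r−1} such that: (i) f = f_1 + ⋯ + f_{r−1} pointwise; (ii) each f_m uses the same partitions 𝒫_k in every coordinate k ≠ h and a two-interval partition { I_{h,1} ∪ ⋯ ∪ I_{h,m}, I_{h,m+1} ∪ ⋯ ∪ I_{h,r} } in coordinate h; (iii) each f_m is ν-identifiable; and (iv) sup_{m} ‖f_m‖_∞ ≤ 2 ‖f‖_∞. -/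

import Mathlib

/-!
Write `W_m = ν_h(I_{h,1} ∪ ⋯ ∪ I_{h,m})` and `Δ_m` for the jump of the heights across the
boundary between `I_{h,m}` and `I_{h,m+1}`. The `m`-th binary tree gets the height `(W_m − 1) Δ_m`
on its left piece and `W_m Δ_m` on its right piece. Summation by parts, with
`∑_i ν_h(I_{h,i}) = 1` and identifiability of `γ` in coordinate `h`, telescopes the sum of these
back to `γ`. Identifiability of the `m`-th tree in coordinate `h` is `(W − 1) W + W (1 − W) = 0`;
in the other coordinates it is inherited linearly from `γ`. Both coefficients have modulus at
most `1`, so every height is at most `2‖f‖_∞` in modulus, once the heights of cells with an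
empty piece (which do not affect `f`) are set to zero.
-/

open MeasureTheory Finset

noncomputable section

/-- `I 0, …, I (φ−1)` is an interval partition of `[0,1]`: the pieces are intervals
(order-connected sets), pairwise disjoint, and their union is `[0,1]`. -/
def IsIntervalPartition (φ : ℕ) (I : ℕ → Set ℝ) : Prop :=
  (∀ k < φ, (I k).OrdConnected) ∧
  (∀ k < φ, ∀ l < φ, k ≠ l → Disjoint (I k) (I l)) ∧
  (⋃ k ∈ Finset.range φ, I k) = Set.Icc (0 : ℝ) 1

/-- The multinary-product tree with coordinate partitions `P j 0, …, P j (φ j − 1)` and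
heights `γ`: `f(x) = ∑_𝓵 γ_𝓵 ∏_j 𝟙(x_j ∈ I_{j,ℓ_j})`. -/
def treeFun {ι : Type*} [Fintype ι] [DecidableEq ι] (φ : ι → ℕ) (P : ι → ℕ → Set ℝ)
    (γ : (ι → ℕ) → ℝ) (x : ι → ℝ) : ℝ :=
  ∑ 𝓵 ∈ Fintype.piFinset (fun j => Finset.range (φ j)),
    γ 𝓵 * ∏ j, Set.indicator (P j (𝓵 j)) (fun _ => (1 : ℝ)) (x j)

/-- The identifiability condition for the heights `γ` of a multinary-product tree with
respect to the weights `w j k` (the `ν_j`-masses of the pieces): every one-dimensional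
weighted partial sum vanishes. -/
def IdentHeightsW {ι : Type*} [Fintype ι] [DecidableEq ι] (φ : ι → ℕ)
    (w : ι → ℕ → ℝ) (γ : (ι → ℕ) → ℝ) : Prop :=
  ∀ j : ι, ∀ 𝓵 ∈ Fintype.piFinset (fun j => Finset.range (φ j)),
    ∑ k ∈ Finset.range (φ j), γ (Function.update 𝓵 j k) * w j k = 0

/-- The coordinate partitions obtained by keeping `P j` for `j ≠ h` and replacing the
partition in coordinate `h` by the two-piece partition
`{I_{h,1} ∪ ⋯ ∪ I_{h,m}, I_{h,m+1} ∪ ⋯ ∪ I_{h,r}}`. -/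
def splitPart {ι : Type*} [DecidableEq ι] (P : ι → ℕ → Set ℝ) (h : ι) (r m : ℕ) :
    ι → ℕ → Set ℝ :=
  fun j k =>
    if j = h then
      (if k = 0 then ⋃ i ∈ Finset.range m, P h i else ⋃ i ∈ Finset.Ico m r, P h i)
    else P j k

open Function

theorem IsIntervalPartition.pairwiseDisjoint {φ : ℕ} {I : ℕ → Set ℝ}
    (hI : IsIntervalPartition φ I) : (range φ : Set ℕ).PairwiseDisjoint I :=
  fun k hk l hl hkl => hI.2.1 k (mem_range.1 hk) l (mem_range.1 hl) hkl

theorem IsIntervalPartition.toReal_measure_biUnion {φ : ℕ} {I : ℕ → Set ℝ}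
    (hI : IsIntervalPartition φ I) (ν : Measure ℝ) [IsFiniteMeasure ν] {s : Finset ℕ}
    (hs : s ⊆ range φ) : (ν (⋃ i ∈ s, I i)).toReal = ∑ i ∈ s, (ν (I i)).toReal := by
  simpa only [measureReal_def] using measureReal_biUnion_finset (μ := ν)
    (hI.pairwiseDisjoint.subset (coe_subset.2 hs))
    fun i hi => (hI.1 i (mem_range.1 (hs hi))).measurableSet

theorem IsIntervalPartition.sum_toReal_measure {φ : ℕ} {I : ℕ → Set ℝ}
    (hI : IsIntervalPartition φ I) (ν : Measure ℝ) [IsFiniteMeasure ν]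
    (hν : ν (Set.Icc 0 1) = 1) : ∑ i ∈ range φ, (ν (I i)).toReal = 1 := by
  rw [← hI.toReal_measure_biUnion ν subset_rfl, hI.2.2, hν, ENNReal.toReal_one]

theorem sum_Icc_cumWeight_mul_jump (w g : ℕ → ℝ) (k n : ℕ) :
    ∑ m ∈ Icc 1 n, ((∑ i ∈ range m, w i) - if k < m then 1 else 0) * (g m - g (m - 1)) =
      (∑ i ∈ range (n + 1), w i) * g n - ∑ i ∈ range (n + 1), w i * g i -
        if k ≤ n then g n - g k else 0 := by
  induction n with
  | zero => by_cases hk : k = 0 <;> simp [hk]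
  | succ n ih =>
    rw [sum_Icc_succ_top (by omega), ih, sum_range_succ w (n + 1),
      sum_range_succ (fun i => w i * g i) (n + 1), Nat.add_sub_cancel]
    rcases lt_trichotomy k (n + 1) with hk | rfl | hk
    · simp only [if_pos hk, if_pos (Nat.lt_succ_iff.1 hk), if_pos hk.le]
      ring
    · simp only [lt_irrefl, if_false, if_neg (by omega : ¬n + 1 ≤ n), le_refl, if_true]
      ring
    · simp only [if_neg (lt_asymm hk), if_neg (by omega : ¬k ≤ n), if_neg (by omega : ¬k ≤ n + 1)]
      ring

theorem sum_Icc_cumWeight_mul_jump_eq {w g : ℕ → ℝ} {r k : ℕ} (hk : k < r)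
    (hw : ∑ i ∈ range r, w i = 1) (hwg : ∑ i ∈ range r, w i * g i = 0) :
    ∑ m ∈ Icc 1 (r - 1), ((∑ i ∈ range m, w i) - if k < m then 1 else 0) * (g m - g (m - 1)) =
      g k := by
  obtain ⟨n, rfl⟩ : ∃ n, r = n + 1 := ⟨r - 1, by omega⟩
  rw [Nat.add_sub_cancel, sum_Icc_cumWeight_mul_jump, hw, hwg, if_pos (by omega)]
  ring

section Trees

variable {ι : Type*}

section TreeFun

variable [Fintype ι] [DecidableEq ι] {φ ψ : ι → ℕ} {P Q : ι → ℕ → Set ℝ}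

theorem treeFun_eq_of_mem (hP : ∀ j, (range (φ j) : Set ℕ).PairwiseDisjoint (P j))
    (γ : (ι → ℕ) → ℝ) {x : ι → ℝ} {𝓵 : ι → ℕ}
    (h𝓵 : 𝓵 ∈ Fintype.piFinset fun j => range (φ j)) (hx : ∀ j, x j ∈ P j (𝓵 j)) :
    treeFun φ P γ x = γ 𝓵 := by
  unfold treeFun
  rw [sum_eq_single_of_mem 𝓵 h𝓵, prod_eq_one fun j _ => Set.indicator_of_mem (hx j) _, mul_one]
  intro 𝓵' h𝓵' hne
  obtain ⟨j, hj⟩ := ne_iff.1 hne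
  have hxj : x j ∉ P j (𝓵' j) := fun hx' =>
    Set.disjoint_left.1 (hP j (mem_coe.2 (Fintype.mem_piFinset.1 h𝓵' j))
      (mem_coe.2 (Fintype.mem_piFinset.1 h𝓵 j)) hj) hx' (hx j)
  rw [prod_eq_zero (mem_univ j) (Set.indicator_of_notMem hxj _), mul_zero]

theorem treeFun_eq_zero_of_forall_notMem (γ : (ι → ℕ) → ℝ) {x : ι → ℝ} {j : ι}
    (hj : ∀ k < φ j, x j ∉ P j k) : treeFun φ P γ x = 0 :=
  sum_eq_zero fun 𝓵 h𝓵 => by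
    rw [prod_eq_zero (mem_univ j) (Set.indicator_of_notMem
      (hj _ (mem_range.1 (Fintype.mem_piFinset.1 h𝓵 j))) _), mul_zero]

theorem treeFun_congr_heights {γ₁ γ₂ : (ι → ℕ) → ℝ}
    (h : ∀ 𝓵 ∈ Fintype.piFinset fun j => range (φ j), (∀ j, (P j (𝓵 j)).Nonempty) →
      γ₁ 𝓵 = γ₂ 𝓵) :
    treeFun φ P γ₁ = treeFun φ P γ₂ := by
  funext x
  refine sum_congr rfl fun 𝓵 h𝓵 => ?_
  by_cases hx : ∀ j, x j ∈ P j (𝓵 j)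
  · rw [h 𝓵 h𝓵 fun j => ⟨x j, hx j⟩]
  · obtain ⟨j, hj⟩ := not_forall.1 hx
    rw [prod_eq_zero (mem_univ j) (Set.indicator_of_notMem hj _), mul_zero, mul_zero]

theorem treeFun_sum {α : Type*} (s : Finset α) (γ : α → (ι → ℕ) → ℝ) (x : ι → ℝ) :
    treeFun φ P (fun 𝓵 => ∑ a ∈ s, γ a 𝓵) x = ∑ a ∈ s, treeFun φ P (γ a) x := by
  simp only [treeFun, sum_mul]
  exact sum_comm

theorem abs_treeFun_le (hP : ∀ j, (range (φ j) : Set ℕ).PairwiseDisjoint (P j))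
    {γ : (ι → ℕ) → ℝ} {C : ℝ} (hC : 0 ≤ C)
    (hγ : ∀ 𝓵 ∈ Fintype.piFinset fun j => range (φ j), |γ 𝓵| ≤ C) (x : ι → ℝ) :
    |treeFun φ P γ x| ≤ C := by
  by_cases hx : ∀ j, ∃ k < φ j, x j ∈ P j k
  · choose 𝓵 h𝓵 hx using hx
    have h𝓵' : 𝓵 ∈ Fintype.piFinset fun j => range (φ j) :=
      Fintype.mem_piFinset.2 fun j => mem_range.2 (h𝓵 j)
    rw [treeFun_eq_of_mem hP γ h𝓵' hx]
    exact hγ 𝓵 h𝓵'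
  · push Not at hx
    obtain ⟨j, hj⟩ := hx
    rw [treeFun_eq_zero_of_forall_notMem γ hj, abs_zero]
    exact hC

theorem treeFun_eq_of_refines (hP : ∀ j, (range (φ j) : Set ℕ).PairwiseDisjoint (P j))
    (hQ : ∀ j, (range (ψ j) : Set ℕ).PairwiseDisjoint (Q j)) (π : (ι → ℕ) → ι → ℕ)
    (hπ : ∀ 𝓵 ∈ Fintype.piFinset fun j => range (φ j),
      (π 𝓵 ∈ Fintype.piFinset fun j => range (ψ j)) ∧ ∀ j, P j (𝓵 j) ⊆ Q j (π 𝓵 j))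
    (hcover : ∀ j, ∀ k < ψ j, Q j k ⊆ ⋃ i ∈ range (φ j), P j i) (γ : (ι → ℕ) → ℝ)
    (x : ι → ℝ) : treeFun ψ Q γ x = treeFun φ P (γ ∘ π) x := by
  by_cases hx : ∀ j, ∃ k < φ j, x j ∈ P j k
  · choose 𝓵 h𝓵 hx using hx
    have h𝓵' : 𝓵 ∈ Fintype.piFinset fun j => range (φ j) :=
      Fintype.mem_piFinset.2 fun j => mem_range.2 (h𝓵 j)
    rw [treeFun_eq_of_mem hP _ h𝓵' hx,
      treeFun_eq_of_mem hQ γ (hπ 𝓵 h𝓵').1 fun j => (hπ 𝓵 h𝓵').2 j (hx j), comp_apply]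
  · push Not at hx
    obtain ⟨j, hj⟩ := hx
    have hjQ : ∀ k < ψ j, x j ∉ Q j k := fun k hk hxk => by
      obtain ⟨i, hi, hxi⟩ := Set.mem_iUnion₂.1 (hcover j k hk hxk)
      exact hj i (mem_range.1 hi) hxi
    rw [treeFun_eq_zero_of_forall_notMem _ hj, treeFun_eq_zero_of_forall_notMem γ hjQ]

end TreeFun

def liveCells (P : ι → ℕ → Set ℝ) : Set (ι → ℕ) := {𝓵 | ∀ j, (P j (𝓵 j)).Nonempty}

/-- `W` plays the role of the `ν_h`-mass of the left piece `P h 0 ∪ ⋯ ∪ P h (m - 1)`; the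
second factor is the jump of `γ` across its right end. -/
def splitHeights [DecidableEq ι] (γ : (ι → ℕ) → ℝ) (h : ι) (W : ℝ) (m : ℕ) :
    (ι → ℕ) → ℝ :=
  fun 𝓵 => (if 𝓵 h = 0 then W - 1 else W) * (γ (update 𝓵 h m) - γ (update 𝓵 h (m - 1)))

section Heights

variable [Fintype ι] [DecidableEq ι] {φ : ι → ℕ} {w : ι → ℕ → ℝ} {γ : (ι → ℕ) → ℝ}

theorem update_mem_piFinset_range {𝓵 : ι → ℕ} {h : ι} {i : ℕ} (hi : i < φ h)
    (h𝓵 : ∀ j ≠ h, 𝓵 j < φ j) :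
    update 𝓵 h i ∈ Fintype.piFinset fun j => range (φ j) := by
  refine Fintype.mem_piFinset.2 fun j => mem_range.2 ?_
  rcases eq_or_ne j h with rfl | hjh
  · rwa [update_self]
  · rw [update_of_ne hjh]
    exact h𝓵 j hjh

theorem abs_indicator_liveCells_le {P : ι → ℕ → Set ℝ}
    (hP : ∀ j, (range (φ j) : Set ℕ).PairwiseDisjoint (P j)) {B : ℝ}
    (hB : ∀ x, |treeFun φ P γ x| ≤ B) {𝓵 : ι → ℕ}
    (h𝓵 : 𝓵 ∈ Fintype.piFinset fun j => range (φ j)) :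
    |(liveCells P).indicator γ 𝓵| ≤ B := by
  by_cases hlive : 𝓵 ∈ liveCells P
  · choose x hx using show ∀ j, (P j (𝓵 j)).Nonempty from hlive
    rw [Set.indicator_of_mem hlive, ← treeFun_eq_of_mem hP γ h𝓵 hx]
    exact hB x
  · rw [Set.indicator_of_notMem hlive, abs_zero]
    exact (abs_nonneg _).trans (hB 0)

theorem IdentHeightsW.indicator_liveCells (hγ : IdentHeightsW φ w γ) (P : ι → ℕ → Set ℝ)
    (hw : ∀ j k, P j k = ∅ → w j k = 0) : IdentHeightsW φ w ((liveCells P).indicator γ) := by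
  intro j 𝓵 h𝓵
  by_cases hlive : ∀ i ≠ j, (P i (𝓵 i)).Nonempty
  · rw [← hγ j 𝓵 h𝓵]
    refine sum_congr rfl fun k _ => ?_
    rcases (P j k).eq_empty_or_nonempty with hk | hk
    · rw [hw j k hk, mul_zero, mul_zero]
    · have hlive' : update 𝓵 j k ∈ liveCells P := fun i => by
        rcases eq_or_ne i j with rfl | hij
        · rwa [update_self]
        · rw [update_of_ne hij]
          exact hlive i hij
      rw [Set.indicator_of_mem hlive']
  · push Not at hlive
    obtain ⟨i, hij, hi⟩ := hlive
    refine sum_eq_zero fun k _ => ?_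
    rw [Set.indicator_of_notMem, zero_mul]
    exact fun hlive => (hlive i).ne_empty (by rwa [update_of_ne hij])

theorem IdentHeightsW.eq_sum_splitHeights (hγ : IdentHeightsW φ w γ) (h : ι)
    (hw : ∑ i ∈ range (φ h), w h i = 1) {𝓵 : ι → ℕ}
    (h𝓵 : 𝓵 ∈ Fintype.piFinset fun j => range (φ j)) :
    γ 𝓵 = ∑ m ∈ Icc 1 (φ h - 1), splitHeights γ h (∑ i ∈ range m, w h i) m
      (update 𝓵 h (if 𝓵 h < m then 0 else 1)) := by
  have hwg : ∑ i ∈ range (φ h), w h i * γ (update 𝓵 h i) = 0 := by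
    rw [← hγ h 𝓵 h𝓵]
    exact sum_congr rfl fun _ _ => mul_comm _ _
  have key := sum_Icc_cumWeight_mul_jump_eq
    (mem_range.1 (Fintype.mem_piFinset.1 h𝓵 h)) hw hwg
  rw [update_eq_self] at key
  refine key.symm.trans (sum_congr rfl fun m _ => ?_)
  by_cases hlt : 𝓵 h < m
  · simp only [splitHeights, update_self, update_idem, if_pos hlt, if_true]
  · simp only [splitHeights, update_self, update_idem, if_neg hlt, one_ne_zero, if_false, sub_zero]

theorem identHeightsW_splitHeights (hγ : IdentHeightsW φ w γ) {h : ι} {m : ℕ} (hm : m < φ h)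
    (W : ℝ) {w' : ι → ℕ → ℝ} (hw' : ∀ j ≠ h, w' j = w j) (hw'0 : w' h 0 = W)
    (hw'1 : w' h 1 = 1 - W) :
    IdentHeightsW (update φ h 2) w' (splitHeights γ h W m) := by
  intro j 𝓵 h𝓵
  rcases eq_or_ne j h with rfl | hjh
  · simp only [update_self, sum_range_succ, range_one, sum_singleton, splitHeights, update_idem,
      hw'0, hw'1, if_true, one_ne_zero, if_false]
    ring
  · have h𝓵' : ∀ i ≠ h, 𝓵 i < φ i := fun i hih => by
      simpa [update_of_ne hih] using Fintype.mem_piFinset.1 h𝓵 i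
    have hA := hγ j _ (update_mem_piFinset_range hm h𝓵')
    have hB := hγ j _ (update_mem_piFinset_range ((Nat.sub_le m 1).trans_lt hm) h𝓵')
    simp only [update_of_ne hjh, hw' j hjh, splitHeights, update_of_ne hjh.symm,
      update_comm hjh, mul_assoc, sub_mul, ← mul_sum, sum_sub_distrib, hA, hB]
    ring

theorem abs_splitHeights_le {B : ℝ}
    (hγ : ∀ 𝓵 ∈ Fintype.piFinset fun j => range (φ j), |γ 𝓵| ≤ B) {h : ι} {m : ℕ}
    (hm : m < φ h) {W : ℝ} (hW0 : 0 ≤ W) (hW1 : W ≤ 1) {𝓵 : ι → ℕ}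
    (h𝓵 : ∀ j ≠ h, 𝓵 j < φ j) : |splitHeights γ h W m 𝓵| ≤ 2 * B := by
  have hcoef : |if 𝓵 h = 0 then W - 1 else W| ≤ 1 := by
    split_ifs
    · rw [abs_of_nonpos (by linarith)]; linarith
    · rwa [abs_of_nonneg hW0]
  have hjump : |γ (update 𝓵 h m) - γ (update 𝓵 h (m - 1))| ≤ 2 * B := by
    calc _ ≤ |γ (update 𝓵 h m)| + |γ (update 𝓵 h (m - 1))| := abs_sub _ _
      _ ≤ B + B := add_le_add (hγ _ (update_mem_piFinset_range hm h𝓵))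
          (hγ _ (update_mem_piFinset_range ((Nat.sub_le m 1).trans_lt hm) h𝓵))
      _ = 2 * B := by ring
  rw [splitHeights, abs_mul]
  simpa only [one_mul] using mul_le_mul hcoef hjump (abs_nonneg _) zero_le_one

end Heights

section SplitPart

variable [DecidableEq ι] {φ : ι → ℕ} {P : ι → ℕ → Set ℝ} {h : ι} {r m : ℕ}

theorem splitPart_self_zero : splitPart P h r m h 0 = ⋃ i ∈ range m, P h i := by
  simp [splitPart]

theorem splitPart_self_of_ne_zero {k : ℕ} (hk : k ≠ 0) :
    splitPart P h r m h k = ⋃ i ∈ Ico m r, P h i := by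
  simp [splitPart, hk]

theorem splitPart_of_ne {j : ι} (hjh : j ≠ h) : splitPart P h r m j = P j := by
  funext k
  simp [splitPart, hjh]

theorem pairwiseDisjoint_splitPart (hP : ∀ j, (range (φ j) : Set ℕ).PairwiseDisjoint (P j))
    (j : ι) : (range (update φ h 2 j) : Set ℕ).PairwiseDisjoint (splitPart P h (φ h) m j) := by
  rcases eq_or_ne j h with rfl | hjh
  · have hsides : Disjoint (⋃ i ∈ range m, P j i) (⋃ i ∈ Ico m (φ j), P j i) :=
      Set.disjoint_iUnion₂_left.2 fun i hi => Set.disjoint_iUnion₂_right.2 fun i' hi' =>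
        have hii' : i < i' := (mem_range.1 hi).trans_le (mem_Ico.1 hi').1
        hP j (mem_coe.2 (mem_range.2 (hii'.trans (mem_Ico.1 hi').2)))
          (mem_coe.2 (mem_range.2 (mem_Ico.1 hi').2)) hii'.ne
    intro k hk l hl hkl
    simp only [update_self, coe_range, Set.mem_Iio] at hk hl
    obtain ⟨rfl, rfl⟩ | ⟨rfl, rfl⟩ : (k = 0 ∧ l = 1) ∨ (k = 1 ∧ l = 0) := by omega
    · simpa only [onFun, splitPart_self_zero, splitPart_self_of_ne_zero one_ne_zero] using hsides
    · simpa only [onFun, splitPart_self_zero, splitPart_self_of_ne_zero one_ne_zero]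
        using hsides.symm
  · rw [update_of_ne hjh, splitPart_of_ne hjh]
    exact hP j

theorem treeFun_splitPart [Fintype ι]
    (hP : ∀ j, (range (φ j) : Set ℕ).PairwiseDisjoint (P j)) (hm : m ≤ φ h)
    (γ : (ι → ℕ) → ℝ) (x : ι → ℝ) :
    treeFun (update φ h 2) (splitPart P h (φ h) m) γ x =
      treeFun φ P (fun 𝓵 => γ (update 𝓵 h (if 𝓵 h < m then 0 else 1))) x := by
  refine treeFun_eq_of_refines hP (pairwiseDisjoint_splitPart hP)
    (fun 𝓵 => update 𝓵 h (if 𝓵 h < m then 0 else 1)) (fun 𝓵 h𝓵 => ⟨?_, fun j => ?_⟩)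
    (fun j k hk => ?_) γ x
  · refine Fintype.mem_piFinset.2 fun j => mem_range.2 ?_
    rcases eq_or_ne j h with rfl | hjh
    · simp only [update_self]
      split_ifs <;> omega
    · simpa [update_of_ne hjh] using Fintype.mem_piFinset.1 h𝓵 j
  · rcases eq_or_ne j h with rfl | hjh
    · have hk := mem_range.1 (Fintype.mem_piFinset.1 h𝓵 j)
      simp only [update_self]
      split_ifs with hlt
      · rw [splitPart_self_zero]
        exact subset_set_biUnion_of_mem (mem_range.2 hlt)
      · rw [splitPart_self_of_ne_zero one_ne_zero]
        exact subset_set_biUnion_of_mem (mem_Ico.2 ⟨not_lt.1 hlt, hk⟩)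
    · rw [update_of_ne hjh, splitPart_of_ne hjh]
  · rcases eq_or_ne j h with rfl | hjh
    · intro y hy
      rcases eq_or_ne k 0 with rfl | hk0
      · rw [splitPart_self_zero] at hy
        obtain ⟨i, hi, hyi⟩ := Set.mem_iUnion₂.1 hy
        exact Set.mem_iUnion₂.2 ⟨i, mem_range.2 ((mem_range.1 hi).trans_le hm), hyi⟩
      · rw [splitPart_self_of_ne_zero hk0] at hy
        obtain ⟨i, hi, hyi⟩ := Set.mem_iUnion₂.1 hy
        exact Set.mem_iUnion₂.2 ⟨i, mem_range.2 (mem_Ico.1 hi).2, hyi⟩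
    · rw [splitPart_of_ne hjh]
      exact subset_set_biUnion_of_mem (mem_range.2 (by simpa [update_of_ne hjh] using hk))

theorem IsIntervalPartition.toReal_measure_splitPart (hP : IsIntervalPartition r (P h))
    (ν : Measure ℝ) [IsFiniteMeasure ν] (hν : ν (Set.Icc 0 1) = 1) (hm : m ≤ r) :
    (ν (splitPart P h r m h 0)).toReal = ∑ i ∈ range m, (ν (P h i)).toReal ∧
      (ν (splitPart P h r m h 1)).toReal = 1 - ∑ i ∈ range m, (ν (P h i)).toReal := by
  rw [splitPart_self_zero, splitPart_self_of_ne_zero one_ne_zero,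
    hP.toReal_measure_biUnion ν (range_subset_range.2 hm),
    hP.toReal_measure_biUnion ν fun i hi => mem_range.2 (mem_Ico.1 hi).2,
    ← hP.sum_toReal_measure ν hν, ← sum_range_add_sum_Ico _ hm]
  exact ⟨rfl, by ring⟩

end SplitPart

end Trees

theorem stmt7_general {ι : Type*} [Fintype ι] [DecidableEq ι]
    (ν : ι → Measure ℝ) [∀ j, IsProbabilityMeasure (ν j)]
    (hsupp : ∀ j, ν j (Set.Icc (0 : ℝ) 1) = 1)
    (φ : ι → ℕ) (P : ι → ℕ → Set ℝ) (hpart : ∀ j, IsIntervalPartition (φ j) (P j))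
    (γ : (ι → ℕ) → ℝ)
    (hident : IdentHeightsW φ (fun j k => (ν j (P j k)).toReal) γ)
    (h : ι) :
    ∃ γ' : ℕ → (ι → ℕ) → ℝ,
      (∀ x : ι → ℝ, treeFun φ P γ x =
          ∑ m ∈ Finset.Icc 1 (φ h - 1),
            treeFun (Function.update φ h 2) (splitPart P h (φ h) m) (γ' m) x) ∧
      (∀ m ∈ Finset.Icc 1 (φ h - 1),
          IdentHeightsW (Function.update φ h 2)
            (fun j k => (ν j (splitPart P h (φ h) m j k)).toReal) (γ' m)) ∧
      (∀ B : ℝ, (∀ x : ι → ℝ, |treeFun φ P γ x| ≤ B) →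
          ∀ m ∈ Finset.Icc 1 (φ h - 1), ∀ x : ι → ℝ,
            |treeFun (Function.update φ h 2) (splitPart P h (φ h) m) (γ' m) x| ≤ 2 * B) := by
  have hP j := (hpart j).pairwiseDisjoint
  have hlt : ∀ m ∈ Icc 1 (φ h - 1), m < φ h := fun m hm => by have := mem_Icc.1 hm; omega
  have hmass m (hm : m ∈ Icc 1 (φ h - 1)) :=
    (hpart h).toReal_measure_splitPart (ν h) (hsupp h) (hlt m hm).le
  have hident₀ := hident.indicator_liveCells P fun j k hk => by simp [hk]
  refine ⟨fun m => splitHeights ((liveCells P).indicator γ) h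
    (∑ i ∈ range m, (ν h (P h i)).toReal) m, fun x => ?_, fun m hm => ?_, fun B hB m hm x => ?_⟩
  · rw [sum_congr rfl fun m hm => treeFun_splitPart hP (hlt m hm).le _ x, ← treeFun_sum]
    refine congrFun (treeFun_congr_heights fun 𝓵 h𝓵 hlive => ?_) x
    exact (Set.indicator_of_mem (s := liveCells P) hlive γ).symm.trans
      (hident₀.eq_sum_splitHeights h ((hpart h).sum_toReal_measure _ (hsupp h)) h𝓵)
  · exact identHeightsW_splitHeights hident₀ (hlt m hm) _
      (fun j hjh => funext fun k => by rw [splitPart_of_ne hjh]) (hmass m hm).1 (hmass m hm).2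
  · obtain ⟨hW, hW'⟩ := hmass m hm
    have hB0 : 0 ≤ 2 * B := by linarith [(abs_nonneg _).trans (hB 0)]
    rw [treeFun_splitPart hP (hlt m hm).le]
    exact abs_treeFun_le hP hB0 (fun 𝓵 h𝓵 =>
      abs_splitHeights_le (fun _ => abs_indicator_liveCells_le hP hB) (hlt m hm)
        (hW ▸ ENNReal.toReal_nonneg) (by linarith [hW' ▸ ENNReal.toReal_nonneg]) fun j hjh => by
          simpa [update_of_ne hjh] using Fintype.mem_piFinset.1 h𝓵 j) x

/-- a ν-identifiable multinary-product tree whose partition in coordinate `h`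
has `r > 2` (left-to-right ordered) pieces decomposes as a sum of `r − 1` ν-identifiable
multinary-product trees, each binary in coordinate `h` (splitting after the first `m`
intervals) and unchanged in the other coordinates, with sup norms at most `2‖f‖_∞`. -/
theorem stmt7 {ι : Type*} [Fintype ι] [DecidableEq ι]
    (ν : ι → Measure ℝ) [∀ j, IsProbabilityMeasure (ν j)]
    (hsupp : ∀ j, ν j (Set.Icc (0 : ℝ) 1) = 1)
    (φ : ι → ℕ) (P : ι → ℕ → Set ℝ) (hpart : ∀ j, IsIntervalPartition (φ j) (P j))
    (γ : (ι → ℕ) → ℝ)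
    (hident : IdentHeightsW φ (fun j k => (ν j (P j k)).toReal) γ)
    (h : ι) (hr : 2 < φ h)
    (hord : ∀ k l, k < l → l < φ h → ∀ x ∈ P h k, ∀ y ∈ P h l, x < y) :
    ∃ γ' : ℕ → (ι → ℕ) → ℝ,
      (∀ x : ι → ℝ, treeFun φ P γ x =
          ∑ m ∈ Finset.Icc 1 (φ h - 1),
            treeFun (Function.update φ h 2) (splitPart P h (φ h) m) (γ' m) x) ∧
      (∀ m ∈ Finset.Icc 1 (φ h - 1),
          IdentHeightsW (Function.update φ h 2)
            (fun j k => (ν j (splitPart P h (φ h) m j k)).toReal) (γ' m)) ∧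
      (∀ B : ℝ, (∀ x : ι → ℝ, |treeFun φ P γ x| ≤ B) →
          ∀ m ∈ Finset.Icc 1 (φ h - 1), ∀ x : ι → ℝ,
            |treeFun (Function.update φ h 2) (splitPart P h (φ h) m) (γ' m) x| ≤ 2 * B) :=
  stmt7_general ν hsupp φ P hpart γ hident h
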